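/- The generalized discrete q-Hermite II polynomials satisfy the three-term recursion ((1-q^{n+1+θ_n(2α+1)})/(1-q^{n+1})) · h̃_{n+1,α}(x,y|q) = x·h̃_{n,α}(x,y|q) - y·q^{-2n+1}(1-q^n)·h̃_{n-1,α}(x,y|q) for n ≥ 1. -/

import Mathlib

open Finset

noncomputable def qPochGen (Q a : ℝ) (n : ℕ) : ℝ := ∏ j ∈ Finset.range n, (1 - a * Q ^ j)

noncomputable def qPoch (q : ℝ) (n : ℕ) : ℝ := qPochGen q q n

noncomputable def gqPochRec (q α : ℝ) : ℕ → ℝ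
  | 0 => 1
  | n + 1 =>
      (1 - Real.rpow q ((n : ℝ) + 1 + (if Even n then 1 else 0) * (2 * α + 1))) *
        gqPochRec q α n

noncomputable def hTilde (q α x y : ℝ) (n : ℕ) : ℝ :=
  qPoch q n * ∑ k ∈ Finset.range (n / 2 + 1),
    (-1 : ℝ) ^ k * q ^ (-2 * (n : ℤ) * (k : ℤ) + (k : ℤ) * (2 * (k : ℤ) + 1)) *
      x ^ (n - 2 * k) * y ^ k / (gqPochRec q α (n - 2 * k) * qPoch (q ^ 2) k)


/-!
Write `h̃_n = (q;q)_n S_n`. In the `k`-th term of `S_{n+1}` split `1 - q^E`, `E = n+1+θ_n(2α+1)`,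
as `q^{2k} (1 - q^{E-2k}) + (1 - q^{2k})`. As `n - 2k` has the parity of `n`, `1 - q^{E-2k}` is the
top factor of `(q;q)_{n+1-2k,α}`, so the first parts sum to `x S_n`; `1 - q^{2k}` is the top factor
of `(q²;q²)_k`, so after the shift `k ↦ k - 1` the second parts sum to `-y q^{-2n+1} S_{n-1}`.
Multiplying by `(q;q)_n = (1 - q^n) (q;q)_{n-1}` gives the recursion.
-/

lemma qPoch_succ (q : ℝ) (n : ℕ) : qPoch q (n + 1) = qPoch q n * (1 - q ^ (n + 1)) := by
  simp only [qPoch, qPochGen, prod_range_succ, ← pow_succ']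

lemma one_sub_pow_ne_zero {q : ℝ} (hq : 0 ≤ q) (hq1 : q < 1) {n : ℕ} (hn : n ≠ 0) :
    1 - q ^ n ≠ 0 :=
  (sub_pos.2 (pow_lt_one₀ hq hq1 hn)).ne'

noncomputable def gqExponent (α : ℝ) (n : ℕ) : ℝ :=
  n + 1 + (if Even n then 1 else 0) * (2 * α + 1)

lemma gqPochRec_succ (q α : ℝ) (n : ℕ) :
    gqPochRec q α (n + 1) = (1 - q ^ gqExponent α n) * gqPochRec q α n :=
  rfl

lemma gqExponent_pos {α : ℝ} (hα : -1 < α) (n : ℕ) : 0 < gqExponent α n := by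
  have hn : (0 : ℝ) ≤ n := n.cast_nonneg
  unfold gqExponent
  split_ifs <;> linarith

lemma gqExponent_of_odd (α : ℝ) {n : ℕ} (hn : Odd n) : gqExponent α n = n + 1 := by
  simp [gqExponent, Nat.not_even_iff_odd.2 hn]

lemma gqExponent_sub_two_mul (α : ℝ) {n k : ℕ} (hk : 2 * k ≤ n) :
    gqExponent α (n - 2 * k) = gqExponent α n - 2 * k := by
  have hpar : Even (n - 2 * k) ↔ Even n := by simp [Nat.even_sub hk]
  simp only [gqExponent, hpar, Nat.cast_sub hk]
  push_cast
  ring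

lemma gqPochRec_pos {q α : ℝ} (hq : 0 ≤ q) (hq1 : q < 1) (hα : -1 < α) :
    ∀ n, 0 < gqPochRec q α n
  | 0 => one_pos
  | n + 1 => by
    rw [gqPochRec_succ]
    exact mul_pos (sub_pos.2 (Real.rpow_lt_one hq hq1 (gqExponent_pos hα n)))
      (gqPochRec_pos hq hq1 hα n)

lemma one_sub_rpow_eq_pow_mul_add {q : ℝ} (hq : 0 < q) (E : ℝ) (m : ℕ) :
    1 - q ^ E = q ^ m * (1 - q ^ (E - m)) + (1 - q ^ m) := by
  rw [mul_one_sub, ← Real.rpow_natCast, ← Real.rpow_add hq, add_sub_cancel]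
  ring

noncomputable def hTildeTerm (q α x y : ℝ) (n k : ℕ) : ℝ :=
  (-1 : ℝ) ^ k * q ^ (-2 * (n : ℤ) * (k : ℤ) + (k : ℤ) * (2 * (k : ℤ) + 1)) *
    x ^ (n - 2 * k) * y ^ k / (gqPochRec q α (n - 2 * k) * qPoch (q ^ 2) k)

noncomputable def hTildeSum (q α x y : ℝ) (n : ℕ) : ℝ :=
  ∑ k ∈ range (n / 2 + 1), hTildeTerm q α x y n k

lemma hTilde_eq_qPoch_mul_hTildeSum (q α x y : ℝ) (n : ℕ) :
    hTilde q α x y n = qPoch q n * hTildeSum q α x y n :=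
  rfl

section Recursion

variable {q α : ℝ} (x y : ℝ)

lemma x_mul_hTildeTerm (hq : q ≠ 0) {n k : ℕ} (hk : 2 * k ≤ n)
    (hg : gqPochRec q α (n + 1 - 2 * k) ≠ 0) :
    x * hTildeTerm q α x y n k =
      q ^ (2 * k) * (1 - q ^ (gqExponent α n - 2 * k)) * hTildeTerm q α x y (n + 1) k := by
  have hidx : n + 1 - 2 * k = n - 2 * k + 1 := by omega
  rw [hidx, gqPochRec_succ, gqExponent_sub_two_mul α hk] at hg
  have hc : 1 - q ^ (gqExponent α n - 2 * k) ≠ 0 := left_ne_zero_of_mul hg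
  have hzpow : q ^ (-2 * (n : ℤ) * k + k * (2 * k + 1)) =
      q ^ (2 * k) * q ^ (-2 * ((n + 1 : ℕ) : ℤ) * k + k * (2 * k + 1)) := by
    rw [← zpow_natCast, ← zpow_add₀ hq]
    push_cast
    ring_nf
  simp only [hTildeTerm, hidx, gqPochRec_succ, gqExponent_sub_two_mul α hk, pow_succ, hzpow]
  field_simp

lemma one_sub_mul_hTildeTerm_add_two (hq : q ≠ 0) {n k : ℕ} (hk : q ^ (2 * (k + 1)) ≠ 1) :
    (1 - q ^ (2 * (k + 1))) * hTildeTerm q α x y (n + 2) (k + 1) =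
      -(y * q ^ (-2 * ((n + 1 : ℕ) : ℤ) + 1)) * hTildeTerm q α x y n k := by
  have hc : 1 - q ^ (2 * (k + 1)) ≠ 0 := sub_ne_zero.2 hk.symm
  have hidx : n + 2 - 2 * (k + 1) = n - 2 * k := by omega
  have hP : qPoch (q ^ 2) (k + 1) = qPoch (q ^ 2) k * (1 - q ^ (2 * (k + 1))) := by
    rw [qPoch_succ, pow_mul]
  have hzpow : q ^ (-2 * ((n + 2 : ℕ) : ℤ) * ((k + 1 : ℕ) : ℤ) +
        ((k + 1 : ℕ) : ℤ) * (2 * ((k + 1 : ℕ) : ℤ) + 1)) =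
      q ^ (-2 * ((n + 1 : ℕ) : ℤ) + 1) * q ^ (-2 * (n : ℤ) * k + k * (2 * k + 1)) := by
    rw [← zpow_add₀ hq]
    push_cast
    ring_nf
  simp only [hTildeTerm, hidx, hzpow]
  rw [hP, pow_succ (-1 : ℝ), pow_succ y]
  field_simp

lemma x_mul_hTildeSum_eq_sum (hq : q ≠ 0) (hg : ∀ m, gqPochRec q α m ≠ 0) (n : ℕ) :
    x * hTildeSum q α x y n =
      ∑ k ∈ range ((n + 1) / 2 + 1),
        q ^ (2 * k) * (1 - q ^ (gqExponent α n - 2 * k)) * hTildeTerm q α x y (n + 1) k := by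
  have hterm : ∀ k ∈ range (n / 2 + 1), x * hTildeTerm q α x y n k =
      q ^ (2 * k) * (1 - q ^ (gqExponent α n - 2 * k)) * hTildeTerm q α x y (n + 1) k :=
    fun k hk => x_mul_hTildeTerm x y hq (by grind) (hg _)
  rw [hTildeSum, mul_sum, sum_congr rfl hterm]
  rcases Nat.even_or_odd n with hn | hn
  · rw [show (n + 1) / 2 = n / 2 by grind]
  · -- the extra top term `k = (n + 1) / 2` on the right vanishes as `gqExponent α n = n + 1`
    obtain ⟨j, rfl⟩ := hn
    have hlast : gqExponent α (2 * j + 1) - 2 * ((j + 1 : ℕ) : ℝ) = 0 := by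
      rw [gqExponent_of_odd α ⟨j, rfl⟩]
      push_cast
      ring
    rw [show (2 * j + 1 + 1) / 2 = (2 * j + 1) / 2 + 1 by omega,
      sum_range_succ _ ((2 * j + 1) / 2 + 1), show (2 * j + 1) / 2 + 1 = j + 1 by omega, hlast]
    simp

lemma neg_y_mul_hTildeSum_eq_sum (hq : q ≠ 0) (hpow : ∀ k ≠ 0, q ^ k ≠ 1) (n : ℕ) :
    -(y * q ^ (-2 * ((n + 1 : ℕ) : ℤ) + 1)) * hTildeSum q α x y n =
      ∑ k ∈ range ((n + 2) / 2 + 1), (1 - q ^ (2 * k)) * hTildeTerm q α x y (n + 2) k := by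
  rw [hTildeSum, mul_sum, show (n + 2) / 2 + 1 = n / 2 + 1 + 1 by omega,
    sum_range_succ' _ (n / 2 + 1), mul_zero, pow_zero, sub_self, zero_mul, add_zero]
  exact sum_congr rfl fun k _ => (one_sub_mul_hTildeTerm_add_two x y hq (hpow _ (by omega))).symm

lemma hTildeSum_recursion (hq : 0 < q) (hq1 : q < 1) (hα : -1 < α) (n : ℕ) :
    (1 - q ^ gqExponent α (n + 1)) * hTildeSum q α x y (n + 2) =
      x * hTildeSum q α x y (n + 1) -
        y * q ^ (-2 * ((n + 1 : ℕ) : ℤ) + 1) * hTildeSum q α x y n := by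
  have hg : ∀ m, gqPochRec q α m ≠ 0 := fun m => (gqPochRec_pos hq.le hq1 hα m).ne'
  have hpow : ∀ k ≠ 0, q ^ k ≠ 1 := fun k hk => (pow_lt_one₀ hq.le hq1 hk).ne
  calc (1 - q ^ gqExponent α (n + 1)) * hTildeSum q α x y (n + 2)
      = ∑ k ∈ range ((n + 2) / 2 + 1),
          (q ^ (2 * k) * (1 - q ^ (gqExponent α (n + 1) - 2 * k)) * hTildeTerm q α x y (n + 2) k +
            (1 - q ^ (2 * k)) * hTildeTerm q α x y (n + 2) k) := by
        rw [hTildeSum, mul_sum]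
        refine sum_congr rfl fun k _ => ?_
        rw [one_sub_rpow_eq_pow_mul_add hq _ (2 * k)]
        push_cast
        ring
    _ = x * hTildeSum q α x y (n + 1) +
          -(y * q ^ (-2 * ((n + 1 : ℕ) : ℤ) + 1)) * hTildeSum q α x y n := by
        rw [sum_add_distrib, x_mul_hTildeSum_eq_sum x y hq.ne' hg,
          neg_y_mul_hTildeSum_eq_sum x y hq.ne' hpow]
    _ = _ := by ring

end Recursion

theorem hTilde_three_term_recursion (q α x y : ℝ) (hq : 0 < q) (hq1 : q < 1)
    (hα : -1 < α) (n : ℕ) (hn : 1 ≤ n) :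
    (1 - Real.rpow q ((n : ℝ) + 1 + (if Even n then 1 else 0) * (2 * α + 1))) /
        (1 - q ^ (n + 1)) * hTilde q α x y (n + 1) =
      x * hTilde q α x y n -
        y * q ^ (-2 * (n : ℤ) + 1) * (1 - q ^ n) * hTilde q α x y (n - 1) := by
  obtain ⟨m, rfl⟩ : ∃ m, n = m + 1 := ⟨n - 1, by omega⟩
  have hQ : 1 - q ^ (m + 2) ≠ 0 := one_sub_pow_ne_zero hq.le hq1 (by omega)
  change (1 - q ^ gqExponent α (m + 1)) / (1 - q ^ (m + 2)) * hTilde q α x y (m + 2) = _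
  simp only [hTilde_eq_qPoch_mul_hTildeSum, Nat.add_sub_cancel, qPoch_succ _ (m + 1),
    qPoch_succ _ m]
  rw [div_mul_eq_mul_div, div_eq_iff hQ]
  linear_combination qPoch q m * (1 - q ^ (m + 1)) * (1 - q ^ (m + 2)) *
    hTildeSum_recursion x y hq hq1 hα m
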